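/- Let G be the group given by a presentation ⟨X | R⟩ with a finite generating set X, and let n ≥ 1. Then the following are equivalent: (1) PP[n] is decidable for G; (2) the word problem for G is decidable and there exists a total computable function f : ℕ → ℕ that is a PP[n]-bound for G with respect to X. -/

import Mathlib

/-- The element of the presented group `⟨Fin k | rels⟩` represented by a word. -/
def wordEval {k : ℕ} (rels : Set (FreeGroup (Fin k))) (w : List (Fin k × Bool)) :
    PresentedGroup rels :=
  PresentedGroup.mk rels (FreeGroup.mk w)

/-- The length `|g|_X` of a shortest word over the (finite) generating set representing
`g` in the presented group. -/
noncomputable def elemLength {k : ℕ} (rels : Set (FreeGroup (Fin k)))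
    (g : PresentedGroup rels) : ℕ :=
  sInf { l : ℕ | ∃ w : List (Fin k × Bool), w.length = l ∧ wordEval rels w = g }

/-- The exponential equation `⟦g 0⟧ = ⟦g 1⟧^{z 1} ⋯ ⟦g n⟧^{z n}` attached to a tuple of
words `g : Fin (n+1) → …` and exponents `z : Fin n → ℤ`. -/
def ExpEq {k : ℕ} (rels : Set (FreeGroup (Fin k))) {n : ℕ}
    (g : Fin (n + 1) → List (Fin k × Bool)) (z : Fin n → ℤ) : Prop :=
  wordEval rels (g 0) = (List.ofFn fun i : Fin n => wordEval rels (g i.succ) ^ z i).prod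

/-- `f` is a PP[n]-bound for `⟨Fin k | rels⟩`: every solvable exponential equation
`g₀ = g₁^{z₁} ⋯ gₙ^{zₙ}` has a solution `k̄` with `‖k̄‖ ≤ f (‖ḡ‖_X)`, where
`‖ḡ‖_X = max_i |g_i|_X` and `‖k̄‖ = max_i |k_i|`. -/
def IsPPBound {k : ℕ} (rels : Set (FreeGroup (Fin k))) (n : ℕ) (f : ℕ → ℕ) : Prop :=
  ∀ g : Fin (n + 1) → List (Fin k × Bool),
    (∃ z : Fin n → ℤ, ExpEq rels g z) →
    ∃ z : Fin n → ℤ, ExpEq rels g z ∧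
      ∀ i : Fin n, (z i).natAbs ≤
        f (Finset.univ.sup fun i : Fin (n + 1) => elemLength rels (wordEval rels (g i)))

/-!
If PP[n] is decidable, so is the word problem: `w = 1` iff the equation `w = ε^{z₁}⋯ε^{zₙ}` (with
`ε` the empty word) is solvable. A computable bound then comes from a search with a guaranteed
stop: only finitely many tuples consist of words of length at most `m`, and among them the
solvable ones can be recognised, so the least `B` below which each of them has a solution can be
found by checking `B = 0, 1, 2, …`.

Conversely, given a computable bound `f` and a decider for the word problem, a solvable equation
has a solution with entries at most `f ‖ḡ‖_X`. Rather than computing `‖ḡ‖_X`, the search uses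
the larger bound `f 0 + ⋯ + f N`, where `N ≥ ‖ḡ‖_X` is the code of the tuple. This leaves
finitely many candidate exponent vectors, and each is checked by running the word-problem decider
on `g₀⁻¹ g₁^{z₁} ⋯ gₙ^{zₙ}`.
-/

open Encodable

theorem Nat.pair_le_pair {a a' b b' : ℕ} (ha : a ≤ a') (hb : b ≤ b') :
    Nat.pair a b ≤ Nat.pair a' b' :=
  calc Nat.pair a b ≤ Nat.pair a' b := by
        rcases ha.lt_or_eq with h | rfl
        exacts [(Nat.pair_lt_pair_left b h).le, le_rfl]
    _ ≤ Nat.pair a' b' := by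
        rcases hb.lt_or_eq with h | rfl
        exacts [(Nat.pair_lt_pair_right a' h).le, le_rfl]

namespace Int

theorem encode_natCast (m : ℕ) : encode (m : ℤ) = 2 * m := rfl

theorem encode_negSucc (m : ℕ) : encode (Int.negSucc m) = 2 * m + 1 := rfl

theorem natAbs_le_encode (z : ℤ) : z.natAbs ≤ encode z := by
  cases z <;> simp only [ofNat_eq_natCast, encode_natCast, encode_negSucc, natAbs_natCast,
    natAbs_negSucc] <;> omega

theorem encode_le_two_mul_natAbs_add_one (z : ℤ) : encode z ≤ 2 * z.natAbs + 1 := by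
  cases z <;> simp only [ofNat_eq_natCast, encode_natCast, encode_negSucc, natAbs_natCast,
    natAbs_negSucc] <;> omega

end Int

theorem Primrec.int_natAbs : Primrec Int.natAbs :=
  (Primrec.nat_div.comp (Primrec.succ.comp Primrec.encode) (Primrec.const 2)).of_eq fun z => by
    cases z <;> simp only [Int.ofNat_eq_natCast, Int.encode_natCast, Int.encode_negSucc,
      Int.natAbs_natCast, Int.natAbs_negSucc] <;> omega

theorem PrimrecPred.int_nonneg : PrimrecPred fun z : ℤ => 0 ≤ z :=
  (Primrec.eq.comp (Primrec.nat_mod.comp Primrec.encode (Primrec.const 2))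
    (Primrec.const 0)).of_eq fun z => by
    cases z <;> simp only [Int.ofNat_eq_natCast, Int.encode_natCast, Int.encode_negSucc] <;> simp

theorem Primrec.list_replicate_flatten {α : Type*} [Primcodable α] :
    Primrec₂ fun (u : List α) (m : ℕ) => (List.replicate m u).flatten :=
  (Primrec.list_flatMap (Primrec.list_range.comp Primrec.snd)
    (Primrec.fst.comp Primrec.fst).to₂).of_eq fun ⟨u, m⟩ => by
      induction m with
      | zero => rfl
      | succ m ih => simp_all [List.range_succ, List.replicate_succ']

theorem Computable.sum_range {f : ℕ → ℕ} (hf : Computable f) :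
    Computable fun N => ∑ j ∈ Finset.range N, f j :=
  (Computable.nat_rec Computable.id (Computable.const 0)
    (Primrec.nat_add.to_comp.comp (Computable.snd.comp Computable.snd)
      (hf.comp (Computable.fst.comp Computable.snd))).to₂).of_eq fun N => by
    induction N with
    | zero => rfl
    | succ N ih => rw [Finset.sum_range_succ, ← ih]; rfl

namespace ComputablePred

variable {α β : Type*} [Primcodable α] [Primcodable β]

theorem comp {p : β → Prop} {f : α → β} (hp : ComputablePred p) (hf : Computable f) :
    ComputablePred fun a => p (f a) :=
  computable_of_manyOneReducible ⟨f, hf, fun _ => Iff.rfl⟩ hp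

theorem imp {p q : α → Prop} (hp : ComputablePred p) (hq : ComputablePred q) :
    ComputablePred fun a => p a → q a := by
  obtain ⟨f, hf, rfl⟩ := computable_iff.1 hp
  obtain ⟨g, hg, rfl⟩ := computable_iff.1 hq
  refine computable_iff.2 ⟨fun a => !f a || g a,
    Primrec.or.to_comp.comp (Primrec.not.to_comp.comp hf) hg, funext fun a => ?_⟩
  simp [imp_iff_not_or]

theorem exists_lt {p : α → ℕ → Prop} {e : α → ℕ}
    (hp : ComputablePred fun x : α × ℕ => p x.1 x.2) (he : Computable e) :
    ComputablePred fun a => ∃ t < e a, p a t := by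
  obtain ⟨f, hf, hfp⟩ := computable_iff.1 hp
  have hsearch : ∀ a N, Nat.rec false (fun t r => r || f (a, t)) N = true ↔ ∃ t < N, p a t := by
    intro a N
    induction N with
    | zero => simp
    | succ N ih =>
      simp only [Bool.or_eq_true, ih, Nat.lt_succ_iff_lt_or_eq, or_and_right, exists_or,
        exists_eq_left, congrFun hfp (a, N)]
  refine computable_iff.2 ⟨fun a => Nat.rec false (fun t r => r || f (a, t)) (e a), ?_,
    funext fun a => propext (hsearch a _).symm⟩
  exact Computable.nat_rec he (Computable.const false)
    (Primrec.or.to_comp.comp (Computable.snd.comp Computable.snd)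
      (hf.comp (Computable.pair Computable.fst (Computable.fst.comp Computable.snd)))).to₂

theorem exists_encode_lt {p : α → β → Prop} {e : α → ℕ}
    (hp : ComputablePred fun x : α × β => p x.1 x.2) (he : Computable e) :
    ComputablePred fun a => ∃ b : β, encode b < e a ∧ p a b := by
  obtain ⟨f, hf, hfp⟩ := computable_iff.1 hp
  have hdecode : ComputablePred fun x : α × ℕ => ∃ b ∈ decode₂ β x.2, p x.1 b := by
    refine computable_iff.2 ⟨fun x => (decode₂ β x.2).any fun b => f (x.1, b), ?_,
      funext fun x => ?_⟩
    · refine (Computable.option_casesOn (Primrec.decode₂.to_comp.comp Computable.snd)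
        (Computable.const false)
        (hf.comp (Computable.pair (Computable.fst.comp Computable.fst) Computable.snd)).to₂).of_eq
        fun x => ?_
      cases decode₂ β x.2 <;> rfl
    · simp [Option.any_eq_true, fun b => congrFun hfp (x.1, b)]
  refine (exists_lt (p := fun a t => ∃ b ∈ decode₂ β t, p a b) hdecode he).of_eq fun a => ?_
  simp only [mem_decode₂]
  constructor
  · rintro ⟨_, ht, b, rfl, hb⟩
    exact ⟨b, ht, hb⟩
  · rintro ⟨b, hb, hpb⟩
    exact ⟨_, hb, b, rfl, hpb⟩

theorem forall_encode_lt {p : α → β → Prop} {e : α → ℕ}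
    (hp : ComputablePred fun x : α × β => p x.1 x.2) (he : Computable e) :
    ComputablePred fun a => ∀ b : β, encode b < e a → p a b :=
  (exists_encode_lt (p := fun a b => ¬p a b) hp.not he).not.of_eq fun a => by simp

theorem exists_of_encode_bound {q : α → β → Prop} {F : ℕ → ℕ}
    (hq : ComputablePred fun x : α × β => q x.1 x.2) (hF : Computable F)
    (hbound : ∀ a, (∃ b, q a b) → ∃ b, encode b < F (encode a) ∧ q a b) :
    ComputablePred fun a => ∃ b, q a b :=
  (exists_encode_lt hq (hF.comp Computable.encode)).of_eq fun a =>
    ⟨fun ⟨b, _, hb⟩ => ⟨b, hb⟩, hbound a⟩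

theorem exists_computable_encode_bound {p : α → Prop} {q : α → β → Prop}
    (hp : ComputablePred p) (hq : ComputablePred fun x : α × β => q x.1 x.2)
    (hpq : ∀ a, p a → ∃ b, q a b) :
    ∃ F : ℕ → ℕ, Computable F ∧
      ∀ N a, encode a < N → p a → ∃ b, encode b < F N ∧ q a b := by
  classical
  have hex : ∀ N, ∃ B, ∀ a : α, encode a < N → p a → ∃ b : β, encode b < B ∧ q a b := by
    intro N
    choose w hw using hpq
    let small := ((Set.finite_Iio N).preimage (encode_injective (α := α)).injOn).toFinset
    let size a := if h : p a then encode (w a h) + 1 else 0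
    refine ⟨small.sup size, fun a ha hpa => ⟨w a hpa, ?_, hw a hpa⟩⟩
    have hle : size a ≤ small.sup size := Finset.le_sup (by simpa [small] using ha)
    simpa [size, dif_pos hpa, Nat.succ_le_iff] using hle
  refine ⟨fun N => Nat.find (hex N), Computable.find ?_ hex, fun N => Nat.find_spec (hex N)⟩
  refine forall_encode_lt (α := ℕ × ℕ) (p := fun x a => p a → ∃ b, encode b < x.2 ∧ q a b)
    (imp (hp.comp Computable.snd) ?_) Computable.fst
  exact exists_encode_lt (α := (ℕ × ℕ) × α) (p := fun y b => q y.2 b)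
    (hq.comp (Computable.pair (Computable.snd.comp Computable.fst) Computable.snd))
    (Computable.snd.comp Computable.fst)

end ComputablePred

namespace Encodable

def listEncodeBound (c : ℕ) : ℕ → ℕ
  | 0 => 0
  | m + 1 => Nat.pair c (listEncodeBound c m) + 1

theorem primrec_listEncodeBound : Primrec₂ listEncodeBound :=
  (Primrec.nat_rec (Primrec.const 0)
    (Primrec.succ.comp (Primrec₂.natPair.comp Primrec.fst
      (Primrec.snd.comp Primrec.snd))).to₂).of_eq fun c m => by
    induction m with
    | zero => rfl
    | succ m ih => simp only [listEncodeBound, ← ih]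

variable {α : Type*} [Primcodable α]

theorem encode_list_le {l : List α} {c m : ℕ} (hm : l.length ≤ m)
    (hc : ∀ a ∈ l, encode a ≤ c) : encode l ≤ listEncodeBound c m := by
  induction l generalizing m with
  | nil => simp
  | cons a l ih =>
    obtain ⟨m, rfl⟩ : ∃ m', m = m' + 1 := Nat.exists_eq_add_one.2 (by simp at hm; omega)
    rw [encode_list_cons, listEncodeBound]
    exact Nat.succ_le_succ (Nat.pair_le_pair (hc a List.mem_cons_self)
      (ih (by simpa using hm) fun b hb => hc b (List.mem_cons_of_mem a hb)))

theorem encode_le_encode_of_mem {a : α} {l : List α} (h : a ∈ l) : encode a ≤ encode l := by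
  induction l with
  | nil => simp at h
  | cons b l ih =>
    rw [encode_list_cons]
    rcases List.mem_cons.1 h with rfl | h
    · exact (Nat.left_le_pair _ _).trans (Nat.le_succ _)
    · exact ((ih h).trans (Nat.right_le_pair _ _)).trans (Nat.le_succ _)

/- The `Primcodable` encoding of `Fin n → α`, through `List.Vector`, is not the one of the
default instance `Encodable.finPi`, hence the explicit instances below. -/
theorem encode_finArrow {n : ℕ} (g : Fin n → α) :
    @encode (Fin n → α) Primcodable.toEncodable g = encode (List.ofFn g) :=
  (Subtype.encode_eq _).trans (congrArg encode (List.Vector.toList_ofFn g))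

theorem encode_apply_le_encode {n : ℕ} (g : Fin n → α) (i : Fin n) :
    encode (g i) ≤ @encode (Fin n → α) Primcodable.toEncodable g :=
  (encode_finArrow g).symm ▸ encode_le_encode_of_mem (List.mem_ofFn.2 ⟨i, rfl⟩)

theorem encode_finArrow_le {n c : ℕ} {g : Fin n → α} (hc : ∀ i, encode (g i) ≤ c) :
    @encode (Fin n → α) Primcodable.toEncodable g ≤ listEncodeBound c n :=
  (encode_finArrow g).symm ▸ encode_list_le (by simp) (by simpa [List.mem_ofFn] using hc)

end Encodable

namespace FreeGroup

variable {α : Type*}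

def wordZPow (w : List (α × Bool)) (z : ℤ) : List (α × Bool) :=
  (List.replicate z.natAbs (if 0 ≤ z then w else invRev w)).flatten

theorem mk_flatten (L : List (List (α × Bool))) : mk L.flatten = (L.map mk).prod := by
  induction L with
  | nil => rfl
  | cons w L ih => rw [List.flatten_cons, ← mul_mk, ih, List.map_cons, List.prod_cons]

theorem mk_wordZPow (w : List (α × Bool)) (z : ℤ) : mk (wordZPow w z) = mk w ^ z := by
  rw [wordZPow, mk_flatten, List.map_replicate, List.prod_replicate]
  split_ifs with hz
  · rw [← zpow_natCast, Int.natAbs_of_nonneg hz]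
  · rw [← inv_mk, inv_pow, ← zpow_natCast, ← zpow_neg, Int.ofNat_natAbs_of_nonpos (by omega),
      neg_neg]

variable [Primcodable α]

theorem primrec_invRev : Primrec (invRev : List (α × Bool) → List (α × Bool)) :=
  Primrec.list_reverse.comp <| Primrec.list_map Primrec.id
    (Primrec.pair (Primrec.fst.comp Primrec.snd)
      (Primrec.not.comp (Primrec.snd.comp Primrec.snd))).to₂

theorem primrec_wordZPow : Primrec₂ (wordZPow : List (α × Bool) → ℤ → List (α × Bool)) :=
  Primrec.list_replicate_flatten.comp
    (Primrec.ite (PrimrecPred.int_nonneg.comp Primrec.snd) Primrec.fst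
      (primrec_invRev.comp Primrec.fst))
    (Primrec.int_natAbs.comp Primrec.snd)

end FreeGroup

open FreeGroup

section PresentedGroup

variable {k n : ℕ} (rels : Set (FreeGroup (Fin k)))

theorem elemLength_le_length (w : List (Fin k × Bool)) :
    elemLength rels (wordEval rels w) ≤ w.length :=
  Nat.sInf_le ⟨w, rfl, rfl⟩

theorem exists_length_eq_elemLength (w : List (Fin k × Bool)) :
    ∃ v, v.length = elemLength rels (wordEval rels w) ∧ wordEval rels v = wordEval rels w :=
  Nat.sInf_mem (s := {l | ∃ v : List (Fin k × Bool), v.length = l ∧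
    wordEval rels v = wordEval rels w}) ⟨_, w, rfl, rfl⟩

def expEqWord (g : Fin (n + 1) → List (Fin k × Bool)) (z : Fin n → ℤ) : List (Fin k × Bool) :=
  invRev (g 0) ++ (List.ofFn fun i => wordZPow (g i.succ) (z i)).flatten

theorem expEq_iff_wordEval_expEqWord (g : Fin (n + 1) → List (Fin k × Bool)) (z : Fin n → ℤ) :
    ExpEq rels g z ↔ wordEval rels (expEqWord g z) = 1 := by
  rw [ExpEq, wordEval, wordEval, expEqWord, ← mul_mk, ← inv_mk, mk_flatten, _root_.map_mul,
    _root_.map_inv, map_list_prod, inv_mul_eq_one, List.map_map, List.map_ofFn]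
  simp [Function.comp_def, mk_wordZPow, wordEval]

theorem primrec_expEqWord : Primrec₂ (expEqWord (k := k) (n := n)) :=
  Primrec.list_append.comp
    (primrec_invRev.comp (Primrec.fin_app.comp Primrec.fst (Primrec.const 0)))
    (Primrec.list_flatten.comp (Primrec.list_ofFn fun i => primrec_wordZPow.comp
      (Primrec.fin_app.comp Primrec.fst (Primrec.const i.succ))
      (Primrec.fin_app.comp Primrec.snd (Primrec.const i))))

theorem expEq_congr {g g' : Fin (n + 1) → List (Fin k × Bool)}
    (h : ∀ i, wordEval rels (g i) = wordEval rels (g' i)) (z : Fin n → ℤ) :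
    ExpEq rels g z ↔ ExpEq rels g' z := by
  simp only [ExpEq, h]

theorem exists_expEq_cons_nil_iff (w : List (Fin k × Bool)) :
    (∃ z : Fin n → ℤ, ExpEq rels (Fin.cons w fun _ => []) z) ↔ wordEval rels w = 1 := by
  simp [ExpEq, wordEval, ← one_eq_mk]

theorem primrec_cons_nil :
    Primrec fun w : List (Fin k × Bool) =>
      (Fin.cons w fun _ => [] : Fin (n + 1) → List (Fin k × Bool)) :=
  Primrec.fin_curry.2 <| (Primrec.ite (Primrec.eq.comp Primrec.snd (Primrec.const 0))
    Primrec.fst (Primrec.const [])).of_eq fun ⟨w, i⟩ => by cases i using Fin.cases <;> simp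

theorem computablePred_wordProblem_of_solvable
    (hPP : ComputablePred fun g : Fin (n + 1) → List (Fin k × Bool) =>
      ∃ z : Fin n → ℤ, ExpEq rels g z) :
    ComputablePred fun w : List (Fin k × Bool) => wordEval rels w = 1 :=
  (hPP.comp primrec_cons_nil.to_comp).of_eq (exists_expEq_cons_nil_iff rels)

theorem computablePred_expEq
    (hWP : ComputablePred fun w : List (Fin k × Bool) => wordEval rels w = 1) :
    ComputablePred fun x : (Fin (n + 1) → List (Fin k × Bool)) × (Fin n → ℤ) =>
      ExpEq rels x.1 x.2 :=
  (hWP.comp primrec_expEqWord.to_comp).of_eq fun x =>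
    (expEq_iff_wordEval_expEqWord rels x.1 x.2).symm

theorem computablePred_solvable_of_isPPBound {f : ℕ → ℕ}
    (hWP : ComputablePred fun w : List (Fin k × Bool) => wordEval rels w = 1)
    (hf : Computable f) (hbound : IsPPBound rels n f) :
    ComputablePred fun g : Fin (n + 1) → List (Fin k × Bool) =>
      ∃ z : Fin n → ℤ, ExpEq rels g z := by
  refine ComputablePred.exists_of_encode_bound (computablePred_expEq rels hWP)
    (F := fun N => listEncodeBound (2 * ∑ j ∈ Finset.range (N + 1), f j + 1) n + 1) ?_
    fun g hsol => ?_
  · exact Primrec.succ.to_comp.comp (primrec_listEncodeBound.to_comp.comp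
      (Primrec.succ.to_comp.comp (Primrec.nat_double.to_comp.comp
        ((Computable.sum_range hf).comp Computable.succ))) (Computable.const n))
  obtain ⟨z, hz, hzf⟩ := hbound g hsol
  have hnorm := Finset.sup_le (s := Finset.univ) fun i _ =>
    (elemLength_le_length rels (g i)).trans
      ((length_le_encode (g i)).trans (encode_apply_le_encode g i))
  have hsum := Finset.single_le_sum (f := f) (fun _ _ => Nat.zero_le _)
    (Finset.mem_range.2 (Nat.lt_add_one_of_le hnorm))
  refine ⟨z, Nat.lt_succ_of_le (encode_finArrow_le fun i => ?_), hz⟩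
  have hcode := Int.encode_le_two_mul_natAbs_add_one (z i)
  have habs := hzf i
  omega

theorem exists_computable_isPPBound
    (hPP : ComputablePred fun g : Fin (n + 1) → List (Fin k × Bool) =>
      ∃ z : Fin n → ℤ, ExpEq rels g z)
    (hWP : ComputablePred fun w : List (Fin k × Bool) => wordEval rels w = 1) :
    ∃ f : ℕ → ℕ, Computable f ∧ IsPPBound rels n f := by
  obtain ⟨F, hF, hFbound⟩ :=
    ComputablePred.exists_computable_encode_bound hPP (computablePred_expEq rels hWP) fun _ h => h
  let c := Finset.univ.sup fun x : Fin k × Bool => encode x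
  refine ⟨fun m => F (listEncodeBound (listEncodeBound c m) (n + 1) + 1), hF.comp ?_,
    fun g hsol => ?_⟩
  · exact Primrec.succ.to_comp.comp (primrec_listEncodeBound.to_comp.comp
      (primrec_listEncodeBound.to_comp.comp (Computable.const c) Computable.id)
      (Computable.const _))
  -- Shortest representatives of the `g i` have a code bounded in terms of `‖ḡ‖_X` alone.
  choose g' hlen heval using fun i => exists_length_eq_elemLength rels (g i)
  obtain ⟨z, hz, hg'z⟩ := hFbound _ g'
    (Nat.lt_succ_of_le (encode_finArrow_le fun i =>
      encode_list_le ((hlen i).trans_le (Finset.le_sup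
        (f := fun j => elemLength rels (wordEval rels (g j))) (Finset.mem_univ i)))
        fun x _ => Finset.le_sup (Finset.mem_univ x)))
    ((exists_congr fun z => expEq_congr rels heval z).2 hsol)
  refine ⟨z, (expEq_congr rels heval z).1 hg'z, fun i => ?_⟩
  exact ((Int.natAbs_le_encode _).trans (encode_apply_le_encode z i)).trans hz.le

end PresentedGroup

theorem PPn_decidable_iff_wordProblem_and_computable_bound
    {k : ℕ} (rels : Set (FreeGroup (Fin k))) (n : ℕ) :
    ComputablePred (fun g : Fin (n + 1) → List (Fin k × Bool) =>
        ∃ z : Fin n → ℤ, ExpEq rels g z) ↔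
      (ComputablePred (fun w : List (Fin k × Bool) => wordEval rels w = 1) ∧
        ∃ f : ℕ → ℕ, Computable f ∧ IsPPBound rels n f) := by
  constructor
  · intro hPP
    have hWP := computablePred_wordProblem_of_solvable rels hPP
    exact ⟨hWP, exists_computable_isPPBound rels hPP hWP⟩
  · rintro ⟨hWP, f, hf, hbound⟩
    exact computablePred_solvable_of_isPPBound rels hWP hf hbound
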